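/- arXiv:1911.10146 — 2 statements merged into one kernel-verified Lean document; each statement's English description precedes it below -/
import Mathlib

section
/- For integers n ≥ m ≥ 1 and 0 ≤ ℓ ≤ n − m, the weighted Lah numbers satisfy the symmetry W(ℓ, n, m) = W(n − m − ℓ, n, m). -/
open Finset Polynomial

/-- Number of lattice points of the `t`-th dilate of the hypersimplex `Δ_{k,n}`:
vectors `y ∈ {0,1,…,t}^n` with `y 0 + ⋯ + y (n-1) = k*t`. -/
def latticeCount (n k t : ℕ) : ℕ :=
  ((Fintype.piFinset fun _ : Fin n => Finset.range (t + 1)).filter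
    fun y => ∑ i, y i = k * t).card

/-- The weight of a linearly ordered block (given as a list): the number of its
entries that are strictly smaller than its first entry. -/
def blockWeight (b : List ℕ) : ℕ := b.countP fun x => decide (x < b.headI)

/-- `P` is a partition of `{1,…,n}` into `m` linearly ordered blocks: a set of `m`
nonempty duplicate-free lists, pairwise disjoint, whose entries cover `{1,…,n}`. -/
def IsLOPartition (n m : ℕ) (P : Finset (List ℕ)) : Prop :=
  P.card = m ∧
  (∀ b ∈ P, b ≠ [] ∧ b.Nodup) ∧
  (∀ b ∈ P, ∀ c ∈ P, b ≠ c → ∀ x ∈ b, x ∉ c) ∧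
  ∀ x : ℕ, (∃ b ∈ P, x ∈ b) ↔ x ∈ Finset.Icc 1 n

/-- The weight of a linearly ordered partition: sum of the weights of its blocks. -/
def partWeight (P : Finset (List ℕ)) : ℕ := ∑ b ∈ P, blockWeight b

/-- The Lah number `L(n,m)`: number of partitions of `{1,…,n}` into `m` linearly
ordered blocks. -/
noncomputable def lah (n m : ℕ) : ℕ := Nat.card {P : Finset (List ℕ) // IsLOPartition n m P}

/-- The weighted Lah number `W(ℓ,n,m)`: number of partitions of `{1,…,n}` into `m`
linearly ordered blocks having weight `ℓ` (zero for negative `ℓ`). -/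
noncomputable def weightedLah (ℓ : ℤ) (n m : ℕ) : ℕ :=
  Nat.card {P : Finset (List ℕ) // IsLOPartition n m P ∧ (partWeight P : ℤ) = ℓ}

/-- Unsigned Stirling number of the first kind `⟦a,b⟧`: number of permutations of a
set with `a` elements having exactly `b` cycles (fixed points count as cycles). -/
noncomputable def stirling1 (a b : ℕ) : ℕ :=
  Nat.card {σ : Equiv.Perm (Fin a) // σ.cycleType.card + (a - σ.support.card) = b}

/-- Unsigned Stirling number of the first kind with the convention that it vanishes
on negative arguments. -/
noncomputable def stirlingZ (a b : ℤ) : ℤ :=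
  if 0 ≤ a ∧ 0 ≤ b then stirling1 a.toNat b.toNat else 0

/-- Eulerian number `A(m,j)`: number of permutations of `{1,…,m}` with exactly `j`
descents, `A(0,0) = 1`. -/
def eulerian : ℕ → ℕ → ℕ
  | 0, 0 => 1
  | 0, _ + 1 => 0
  | _ + 1, 0 => 1
  | m + 1, j + 1 => (j + 2) * eulerian m (j + 1) + (m - j) * eulerian m j

/-- Katzman's formula: `E_{k,n}(t) = Σ_{j=0}^{k-1} (-1)^j C(n,j) binom((k-j)t+n-1-j, n-1)`
as a polynomial in `t` over `ℚ`. -/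
noncomputable def EhrhartHyp (k n : ℕ) : Polynomial ℚ :=
  (((n - 1).factorial : ℚ))⁻¹ • ∑ j ∈ Finset.range k,
    ((-1 : ℚ) ^ j * (n.choose j : ℚ)) •
      ∏ i ∈ Finset.Icc 1 (n - 1), (C ((k : ℚ) - (j : ℚ)) * X + C ((i : ℚ) - (j : ℚ)))

/-!
The reflection `x ↦ n + 1 - x` of `{1,…,n}`, applied to every entry of every block, is an
involution on linearly ordered partitions of `{1,…,n}` into `m` blocks. Being order-reversing,
it exchanges, inside a block of length `k`, the entries smaller than the first one with those
larger than it, so a block of weight `w` becomes one of weight `k - 1 - w`. Summing over the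
blocks, whose lengths add up to `n`, sends weight `ℓ` to `n - m - ℓ`.
-/

lemma blockWeight_map_add_blockWeight {f : ℕ → ℕ} {b : List ℕ} (hne : b ≠ []) (hnd : b.Nodup)
    (hf : StrictAntiOn f {x | x ∈ b}) :
    blockWeight (b.map f) + blockWeight b + 1 = b.length := by
  obtain ⟨a, t, rfl⟩ := List.exists_cons_of_ne_nil hne
  have hat : a ∉ t := (List.nodup_cons.1 hnd).1
  have hsplit : t.countP (· < a) + t.countP (a < ·) = t.length := by
    rw [List.length_eq_countP_add_countP (· < a)]
    congr 1
    refine List.countP_congr fun x hx => ?_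
    have : x ≠ a := fun h => hat (h ▸ hx)
    simp only [decide_eq_true_eq, not_lt]
    omega
  have hreverse : t.countP (fun x => f x < f a) = t.countP (a < ·) :=
    List.countP_congr fun x hx => by
      simpa using hf.lt_iff_gt (List.mem_cons_of_mem a hx) List.mem_cons_self
  rw [blockWeight, blockWeight, List.map_cons, List.headI_cons, List.headI_cons]
  simp only [List.countP_cons, List.countP_map, Function.comp_def, lt_irrefl, decide_false,
    Bool.false_eq_true, if_false, add_zero, List.length_cons, hreverse]
  omega

def mapBlocks (f : ℕ → ℕ) (P : Finset (List ℕ)) : Finset (List ℕ) := P.image (List.map f)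

namespace IsLOPartition

variable {n m : ℕ} {f : ℕ → ℕ} {P : Finset (List ℕ)}

lemma mem_Icc (hP : IsLOPartition n m P) {b : List ℕ} (hb : b ∈ P) {x : ℕ} (hx : x ∈ b) :
    x ∈ Icc 1 n :=
  (hP.2.2.2 x).1 ⟨b, hb, hx⟩

lemma sum_length (hP : IsLOPartition n m P) : ∑ b ∈ P, b.length = n := by
  obtain ⟨-, hblocks, hdisj, hcover⟩ := hP
  have hpairwise : (P : Set (List ℕ)).PairwiseDisjoint List.toFinset := fun b hb c hc hbc =>
    Finset.disjoint_left.2 fun x hxb hxc =>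
      hdisj b hb c hc hbc x (List.mem_toFinset.1 hxb) (List.mem_toFinset.1 hxc)
  have hunion : P.biUnion List.toFinset = Icc 1 n := by
    ext x
    simpa using hcover x
  calc ∑ b ∈ P, b.length = ∑ b ∈ P, b.toFinset.card :=
        Finset.sum_congr rfl fun b hb => (List.toFinset_card_of_nodup (hblocks b hb).2).symm
    _ = n := by rw [← Finset.card_biUnion hpairwise, hunion, Nat.card_Icc, Nat.add_sub_cancel]

lemma leftInvOn_map (hinv : Set.LeftInvOn f f (Icc 1 n)) (hP : IsLOPartition n m P) :
    Set.LeftInvOn (List.map f) (List.map f) P := fun b hb =>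
  calc (b.map f).map f = b.map id := by
        rw [List.map_map]
        exact List.map_congr_left fun x hx => hinv (hP.mem_Icc hb hx)
    _ = b := List.map_id b

lemma mapBlocks_mapBlocks (hinv : Set.LeftInvOn f f (Icc 1 n)) (hP : IsLOPartition n m P) :
    mapBlocks f (mapBlocks f P) = P :=
  Finset.coe_injective <| by
    simpa only [mapBlocks, Finset.coe_image] using (hP.leftInvOn_map hinv).image_image

lemma partWeight_mapBlocks_add (hinv : Set.LeftInvOn f f (Icc 1 n))
    (hanti : StrictAntiOn f (Icc 1 n)) (hP : IsLOPartition n m P) :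
    partWeight (mapBlocks f P) + partWeight P + m = n := by
  rw [partWeight, mapBlocks, Finset.sum_image (hP.leftInvOn_map hinv).injOn, partWeight,
    ← hP.1, Finset.card_eq_sum_ones, ← Finset.sum_add_distrib, ← Finset.sum_add_distrib,
    ← hP.sum_length]
  have hblocks := hP.2.1
  exact Finset.sum_congr rfl fun b hb => blockWeight_map_add_blockWeight (hblocks b hb).1
    (hblocks b hb).2 (hanti.mono fun x hx => hP.mem_Icc hb hx)

lemma mapBlocks (hmaps : Set.MapsTo f (Icc 1 n) (Icc 1 n)) (hinv : Set.LeftInvOn f f (Icc 1 n))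
    (hP : IsLOPartition n m P) : IsLOPartition n m (mapBlocks f P) := by
  have ⟨hcard, hblocks, hdisj, hcover⟩ := hP
  have hinj : Set.InjOn f (Icc 1 n) := hinv.injOn
  simp only [_root_.mapBlocks]
  refine ⟨?_, ?_, ?_, fun x => ⟨?_, fun hx => ?_⟩⟩
  · rw [Finset.card_image_of_injOn (hP.leftInvOn_map hinv).injOn, hcard]
  · simp only [Finset.mem_image, forall_exists_index, and_imp]
    rintro _ b hb rfl
    refine ⟨List.map_eq_nil_iff.not.2 (hblocks b hb).1, (hblocks b hb).2.map_on ?_⟩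
    exact fun x hx y hy => hinj (hP.mem_Icc hb hx) (hP.mem_Icc hb hy)
  · simp only [Finset.mem_image, forall_exists_index, and_imp]
    rintro _ b hb rfl _ c hc rfl hbc x hxb hxc
    obtain ⟨y, hy, rfl⟩ := List.mem_map.1 hxb
    obtain ⟨z, hz, hzy⟩ := List.mem_map.1 hxc
    have hzy : z = y := hinj (hP.mem_Icc hc hz) (hP.mem_Icc hb hy) hzy
    exact hdisj b hb c hc (fun h => hbc (h ▸ rfl)) y hy (hzy ▸ hz)
  · rintro ⟨_, hb', hx⟩
    obtain ⟨b, hb, rfl⟩ := Finset.mem_image.1 hb'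
    obtain ⟨y, hy, rfl⟩ := List.mem_map.1 hx
    exact hmaps (hP.mem_Icc hb hy)
  · obtain ⟨b, hb, hfx⟩ := (hcover (f x)).2 (hmaps hx)
    exact ⟨b.map f, Finset.mem_image_of_mem _ hb, List.mem_map.2 ⟨f x, hfx, hinv hx⟩⟩

end IsLOPartition

def reflectIcc (n x : ℕ) : ℕ := n + 1 - x

lemma mapsTo_reflectIcc (n : ℕ) : Set.MapsTo (reflectIcc n) (Icc 1 n) (Icc 1 n) := by
  intro x hx
  simp only [reflectIcc, coe_Icc, Set.mem_Icc] at hx ⊢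
  omega

lemma leftInvOn_reflectIcc (n : ℕ) : Set.LeftInvOn (reflectIcc n) (reflectIcc n) (Icc 1 n) := by
  intro x hx
  simp only [reflectIcc, coe_Icc, Set.mem_Icc] at hx ⊢
  omega

lemma strictAntiOn_reflectIcc (n : ℕ) : StrictAntiOn (reflectIcc n) (Icc 1 n) := by
  intro x hx y hy hxy
  simp only [reflectIcc, coe_Icc, Set.mem_Icc] at hx hy ⊢
  omega

theorem stmt_6_general (n m : ℕ) (ℓ : ℕ) :
    weightedLah (ℓ : ℤ) n m = weightedLah ((n : ℤ) - (m : ℤ) - (ℓ : ℤ)) n m := by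
  have hreflect {P : Finset (List ℕ)} (hP : IsLOPartition n m P) :
      IsLOPartition n m (mapBlocks (reflectIcc n) P) ∧
        (partWeight (mapBlocks (reflectIcc n) P) : ℤ) = n - m - partWeight P := by
    refine ⟨hP.mapBlocks (mapsTo_reflectIcc n) (leftInvOn_reflectIcc n), ?_⟩
    have := hP.partWeight_mapBlocks_add (leftInvOn_reflectIcc n) (strictAntiOn_reflectIcc n)
    omega
  refine Nat.card_congr
    { toFun := fun P => ⟨mapBlocks (reflectIcc n) P, (hreflect P.2.1).1, ?_⟩
      invFun := fun P => ⟨mapBlocks (reflectIcc n) P, (hreflect P.2.1).1, ?_⟩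
      left_inv := fun P => Subtype.ext (P.2.1.mapBlocks_mapBlocks (leftInvOn_reflectIcc n))
      right_inv := fun P => Subtype.ext (P.2.1.mapBlocks_mapBlocks (leftInvOn_reflectIcc n)) }
  · rw [(hreflect P.2.1).2, P.2.2]
  · rw [(hreflect P.2.1).2, P.2.2]
    ring

/-- symmetry of the weighted Lah numbers:
`W(ℓ,n,m) = W(n-m-ℓ,n,m)` for `0 ≤ ℓ ≤ n - m`. -/
theorem stmt_6 (n m : ℕ) (hm : 1 ≤ m) (hmn : m ≤ n) (ℓ : ℕ) (hℓ : ℓ ≤ n - m) :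
    weightedLah (ℓ : ℤ) n m = weightedLah ((n : ℤ) - (m : ℤ) - (ℓ : ℤ)) n m :=
  stmt_6_general n m ℓ
end

section
/- For integers n and k with 1 ≤ k ≤ n−1 and each integer m with 0 ≤ m ≤ n−1, the coefficient of t^m in the polynomial E_{k,n}(t) ∈ ℚ[t] equals (1/(n−1)!) · Σ_{j=0}^{k−1} Σ_{i=0}^{n−m−1} (−1)^{i+j} · C(n, j) · (k−j)^m · ⟦n−j, m+1+i−j⟧ · ⟦j, j−i⟧, where C denotes the binomial coefficient. -/
/-!
The `j`-th summand of Katzman's formula is `Q((k - j) t)` with `Q = ∏_{i=1}^{n-1} (X + i - j)`,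
and `X * Q` is the falling factorial `X(X-1)⋯(X-j+1)` times the rising factorial
`X(X+1)⋯(X+n-j-1)`. The rising factorial of length `a` is `∑_{σ ∈ S_a} X ^ (#cycles of σ)`:
a permutation of `{0,…,a}` either fixes `0` or arises from one of `{1,…,a}` by inserting `0`
after one of its `a` points, which multiplies the generating polynomial by `X + a`. So its
coefficients are the Stirling numbers `⟦a, b⟧`, and those of the falling factorial are
`(-1)^(a+b) ⟦a, b⟧`. Reversing both factors turns the coefficient of `X^(m+1)` in `X * Q` into a
convolution at `n - 1 - m`, which is the inner sum over `i`.
-/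

open Finset Polynomial

namespace Equiv.Perm

variable {α : Type*} [Fintype α] [DecidableEq α]

def numCycles (σ : Perm α) : ℕ := σ.cycleType.card + (Fintype.card α - #σ.support)

theorem Disjoint.numCycles_mul {σ τ : Perm α} (h : Disjoint σ τ) :
    numCycles (σ * τ) + Fintype.card α = numCycles σ + numCycles τ := by
  have hcard : #σ.support + #τ.support ≤ Fintype.card α :=
    h.card_support_mul ▸ card_le_univ _
  simp only [numCycles, h.cycleType_mul, h.card_support_mul, Multiset.card_add]
  omega

theorem IsCycle.numCycles_swap_mul {c : Perm α} (hc : c.IsCycle) {x : α} (hx : c x ≠ x) :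
    numCycles (swap x (c x) * c) = numCycles c + 1 := by
  have hsupp : #c.support ≤ Fintype.card α := card_le_univ _
  by_cases hcc : c (c x) = x
  · have hswap : c = swap x (c x) := hc.eq_swap_of_apply_apply_eq_self hx hcc
    have htwo : #c.support = 2 := hswap ▸ card_support_swap hx.symm
    have hone : swap x (c x) * c = 1 :=
      calc swap x (c x) * c = swap x (c x) * swap x (c x) := congrArg _ hswap
        _ = 1 := swap_mul_self _ _
    simp only [hone, numCycles, cycleType_one, support_one, hc.cycleType, card_empty,
      Multiset.card_zero, Multiset.card_singleton]
    omega
  · have hx_mem : x ∈ c.support := mem_support.2 hx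
    have hpos := card_pos.2 ⟨x, hx_mem⟩
    simp only [numCycles, (hc.swap_mul hx hcc).cycleType, hc.cycleType,
      support_swap_mul_eq c x hcc, card_sdiff_of_subset (singleton_subset_iff.2 hx_mem),
      card_singleton, Multiset.card_singleton]
    omega

theorem numCycles_swap_mul {σ : Perm α} {x : α} (hx : σ x ≠ x) :
    numCycles (swap x (σ x) * σ) = numCycles σ + 1 := by
  set c := σ.cycleOf x
  set d := σ * c⁻¹
  have hc : c.IsCycle := isCycle_cycleOf σ hx
  have hcx : c x = σ x := cycleOf_apply_self σ x
  have hdisj : Disjoint c d := (disjoint_mul_inv_of_mem_cycleFactorsFinset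
    (cycleOf_mem_cycleFactorsFinset_iff.2 (mem_support.2 hx))).symm
  have hσ : c * d = σ := by rw [hdisj.commute.eq, inv_mul_cancel_right]
  have hdisj' : Disjoint (swap x (c x) * c) d :=
    hdisj.mono (fun z hz => (mem_support_swap_mul_imp_mem_support_ne hz).1) le_rfl
  have h1 := hdisj.numCycles_mul
  have h2 := hdisj'.numCycles_mul
  rw [hσ] at h1
  rw [hc.numCycles_swap_mul (hcx ▸ hx), mul_assoc, hσ, hcx] at h2
  omega

theorem numCycles_extendDomain {β : Type*} [Fintype β] [DecidableEq β] {p : β → Prop}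
    [DecidablePred p] (f : α ≃ Subtype p) (g : Perm α) :
    numCycles (g.extendDomain f) + Fintype.card α = numCycles g + Fintype.card β := by
  have hg : #g.support ≤ Fintype.card α := card_le_univ _
  have hαβ : Fintype.card α ≤ Fintype.card β :=
    (Fintype.card_congr f).trans_le (Fintype.card_subtype_le p)
  simp only [numCycles, cycleType_extendDomain, card_support_extend_domain]
  omega

theorem decomposeFin_symm_zero {n : ℕ} (e : Perm (Fin n)) :
    decomposeFin.symm (0, e) = e.extendDomain (finSuccAboveEquiv 0) := by
  ext x
  refine Fin.cases ?_ (fun i => ?_) x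
  · rw [decomposeFin_symm_apply_zero, extendDomain_apply_not_subtype _ _ (by simp)]
  · have hi : i.succ = (finSuccAboveEquiv 0 i : Fin (n + 1)) := by simp [finSuccAboveEquiv_apply]
    rw [decomposeFin_symm_apply_succ, hi, extendDomain_apply_image]
    simp [finSuccAboveEquiv_apply]

theorem numCycles_decomposeFin_symm_zero {n : ℕ} (e : Perm (Fin n)) :
    numCycles (decomposeFin.symm (0, e)) = numCycles e + 1 := by
  have := numCycles_extendDomain (finSuccAboveEquiv (0 : Fin (n + 1))) e
  simp only [Fintype.card_fin] at this
  rw [decomposeFin_symm_zero]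
  omega

theorem numCycles_decomposeFin_symm_of_ne_zero {n : ℕ} (e : Perm (Fin n)) {p : Fin (n + 1)}
    (hp : p ≠ 0) : numCycles (decomposeFin.symm (p, e)) = numCycles e := by
  set σ := decomposeFin.symm (p, e)
  have hσ0 : σ 0 = p := decomposeFin_symm_apply_zero p e
  have hswap : swap 0 (σ 0) * σ = decomposeFin.symm (0, e) := by
    ext x
    refine Fin.cases ?_ (fun i => ?_) x <;> simp [σ]
  have := numCycles_swap_mul (x := 0) (σ := σ) (by rwa [hσ0])
  rw [hswap, numCycles_decomposeFin_symm_zero] at this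
  omega

theorem sum_X_pow_numCycles (R : Type*) [CommSemiring R] (n : ℕ) :
    ∑ σ : Perm (Fin n), (X : R[X]) ^ numCycles σ = ascPochhammer R n := by
  induction n with
  | zero => simp [numCycles]
  | succ n ih =>
    rw [← decomposeFin.symm.sum_comp, Fintype.sum_prod_type, Fin.sum_univ_succ]
    simp only [numCycles_decomposeFin_symm_zero,
      numCycles_decomposeFin_symm_of_ne_zero _ (Fin.succ_ne_zero _)]
    rw [sum_const, card_univ, Fintype.card_fin, ascPochhammer_succ_right, ← ih]
    simp only [pow_succ, ← sum_mul, nsmul_eq_mul]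
    ring

end Equiv.Perm

open Equiv Equiv.Perm in
theorem coeff_ascPochhammer (R : Type*) [CommSemiring R] (a b : ℕ) :
    (ascPochhammer R a).coeff b = stirling1 a b := by
  have hcard : stirling1 a b = #{σ : Perm (Fin a) | numCycles σ = b} := by
    rw [stirling1, Nat.card_eq_fintype_card, Fintype.card_subtype]
    simp only [numCycles, Fintype.card_fin]
  simp [← sum_X_pow_numCycles, coeff_X_pow, hcard, eq_comm]

theorem ascPochhammer_comp_neg_X (R : Type*) [CommRing R] (a : ℕ) :
    (ascPochhammer R a).comp (-X) = (-1) ^ a * descPochhammer R a := by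
  induction a with
  | zero => simp
  | succ a ih =>
    rw [ascPochhammer_succ_right, descPochhammer_succ_right, mul_comp, ih]
    simp only [add_comp, X_comp, natCast_comp]
    ring

theorem coeff_descPochhammer (R : Type*) [CommRing R] (a b : ℕ) :
    (descPochhammer R a).coeff b = (-1) ^ (a + b) * stirling1 a b := by
  have h := congrArg (coeff · b) (ascPochhammer_comp_neg_X R a)
  simp only [← neg_one_mul (X : R[X]), ← C_1, ← C_neg, comp_C_mul_X_coeff, ← C_pow,
    coeff_C_mul, coeff_ascPochhammer] at h
  calc (descPochhammer R a).coeff b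
      = (-1) ^ a * ((-1) ^ a * (descPochhammer R a).coeff b) := by
        rw [← mul_assoc, ← pow_add, Even.neg_one_pow ⟨a, rfl⟩, one_mul]
    _ = (-1) ^ (a + b) * stirling1 a b := by rw [← h, pow_add]; ring

theorem natDegree_ascPochhammer_le (R : Type*) [Semiring R] (a : ℕ) :
    (ascPochhammer R a).natDegree ≤ a := by
  rw [← ascPochhammer_map (Nat.castRingHom R)]
  exact natDegree_map_le.trans (ascPochhammer_natDegree (S := ℕ) a).le

theorem natDegree_descPochhammer_le (R : Type*) [Ring R] (a : ℕ) :
    (descPochhammer R a).natDegree ≤ a := by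
  rw [← descPochhammer_map (Int.castRingHom R)]
  exact natDegree_map_le.trans (descPochhammer_natDegree (R := ℤ) a).le

theorem stirlingZ_natCast (a b : ℕ) : stirlingZ a b = stirling1 a b := by
  simp [stirlingZ]

theorem stirlingZ_of_neg (a : ℤ) {b : ℤ} (hb : b < 0) : stirlingZ a b = 0 := by
  simp [stirlingZ, hb.not_ge]

theorem coeff_reflect_of_natDegree_le {R : Type*} [Semiring R] {p : R[X]} {a : ℕ}
    (hp : p.natDegree ≤ a) (i : ℕ) :
    (reflect a p).coeff i = if i ≤ a then p.coeff (a - i) else 0 := by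
  rw [coeff_reflect]
  split_ifs with hi
  · rw [revAt_le hi]
  · rw [revAt_eq_self_of_lt (not_le.1 hi), coeff_eq_zero_of_natDegree_lt (by omega)]

theorem coeff_reflect_ascPochhammer (R : Type*) [CommRing R] (a i : ℕ) :
    (reflect a (ascPochhammer R a)).coeff i = (stirlingZ a ((a : ℤ) - i) : R) := by
  rw [coeff_reflect_of_natDegree_le (natDegree_ascPochhammer_le R a)]
  split_ifs with hi
  · rw [coeff_ascPochhammer, ← Nat.cast_sub hi, stirlingZ_natCast, Int.cast_natCast]
  · rw [stirlingZ_of_neg _ (by omega), Int.cast_zero]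

theorem coeff_reflect_descPochhammer (R : Type*) [CommRing R] (a i : ℕ) :
    (reflect a (descPochhammer R a)).coeff i = (-1) ^ i * (stirlingZ a ((a : ℤ) - i) : R) := by
  rw [coeff_reflect_of_natDegree_le (natDegree_descPochhammer_le R a)]
  split_ifs with hi
  · rw [coeff_descPochhammer, ← Nat.cast_sub hi, stirlingZ_natCast, Int.cast_natCast,
      show a + (a - i) = 2 * (a - i) + i by omega, pow_add, pow_mul, neg_one_sq, one_pow, one_mul]
  · rw [stirlingZ_of_neg _ (by omega), Int.cast_zero, mul_zero]

section

variable {R : Type*} [CommRing R]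

theorem descPochhammer_eq_prod_Icc (j : ℕ) :
    descPochhammer R j = ∏ i ∈ Icc 1 j, (X + C ((i : R) - j)) := by
  induction j with
  | zero => simp
  | succ j ih =>
    rw [descPochhammer_succ_left, prod_Icc_succ_top (by omega), ih, Polynomial.prod_comp, mul_comm]
    congr 1
    · refine prod_congr rfl fun i _ => ?_
      rw [add_comp, X_comp, C_comp]
      simp only [Nat.cast_succ, C_sub, C_add, C_1]
      ring
    · simp

theorem X_mul_prod_Icc_eq_descPochhammer_mul_ascPochhammer (j d : ℕ) :
    X * ∏ i ∈ Icc 1 (j + d), (X + C ((i : R) - j)) =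
      descPochhammer R j * ascPochhammer R (d + 1) := by
  induction d with
  | zero => rw [add_zero, ← descPochhammer_eq_prod_Icc, ascPochhammer_one, mul_comm]
  | succ d ih =>
    rw [← add_assoc, prod_Icc_succ_top (by omega), ← mul_assoc, ih,
      ascPochhammer_succ_right (S := R) (d + 1), mul_assoc]
    congr 2
    simp only [Nat.cast_add, Nat.cast_one, map_add, map_sub, map_natCast, C_1]
    ring

theorem coeff_prod_Icc_X_add_C_sub {n j m : ℕ} (hj : j < n) (hm : m < n) :
    (∏ i ∈ Icc 1 (n - 1), (X + C ((i : R) - j))).coeff m =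
      ∑ i ∈ range (n - m), (-1) ^ i *
        (stirlingZ ((n : ℤ) - (j : ℤ)) ((m : ℤ) + 1 + (i : ℤ) - (j : ℤ)) : R) *
        (stirlingZ (j : ℤ) ((j : ℤ) - (i : ℤ)) : R) := by
  obtain ⟨d, rfl⟩ : ∃ d, n = j + (d + 1) := ⟨n - j - 1, by omega⟩
  calc (∏ i ∈ Icc 1 (j + (d + 1) - 1), (X + C ((i : R) - j))).coeff m
      = (descPochhammer R j * ascPochhammer R (d + 1)).coeff (m + 1) := by
        rw [← X_mul_prod_Icc_eq_descPochhammer_mul_ascPochhammer, coeff_X_mul,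
          show j + (d + 1) - 1 = j + d by omega]
    _ = (reflect (j + (d + 1)) (descPochhammer R j * ascPochhammer R (d + 1))).coeff
          (j + d - m) := by
        rw [coeff_reflect, revAt_le (by omega), show j + (d + 1) - (j + d - m) = m + 1 by omega]
    _ = ∑ i ∈ range (j + (d + 1) - m), (reflect j (descPochhammer R j)).coeff i *
          (reflect (d + 1) (ascPochhammer R (d + 1))).coeff (j + d - m - i) := by
        rw [reflect_mul _ _ (natDegree_descPochhammer_le R j) (natDegree_ascPochhammer_le R _),
          coeff_mul, Nat.sum_antidiagonal_eq_sum_range_succ_mk,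
          Nat.succ_eq_add_one, show j + d - m + 1 = j + (d + 1) - m by omega]
    _ = _ := by
        refine sum_congr rfl fun i hi => ?_
        have hi_lt := mem_range.1 hi
        rw [coeff_reflect_descPochhammer, coeff_reflect_ascPochhammer,
          show ((d + 1 : ℕ) : ℤ) - ((j + d - m - i : ℕ) : ℤ) = m + 1 + i - j by omega,
          show ((d + 1 : ℕ) : ℤ) = ((j + (d + 1) : ℕ) : ℤ) - j by omega]
        ring

end

theorem stmt_14_general (n k m : ℕ) (hkn : k ≤ n - 1) (hm : m ≤ n - 1) :
    (EhrhartHyp k n).coeff m =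
      (1 / ((n - 1).factorial : ℚ)) *
        ∑ j ∈ Finset.range k, ∑ i ∈ Finset.range (n - m),
          (-1 : ℚ) ^ (i + j) * (n.choose j : ℚ) * ((k - j : ℕ) : ℚ) ^ m *
            (stirlingZ ((n : ℤ) - (j : ℤ)) ((m : ℤ) + 1 + (i : ℤ) - (j : ℤ)) : ℚ) *
            (stirlingZ (j : ℤ) ((j : ℤ) - (i : ℤ)) : ℚ) := by
  rw [EhrhartHyp, coeff_smul, finsetSum_coeff, one_div, smul_eq_mul]
  congr 1
  refine sum_congr rfl fun j hj => ?_
  have hjk := mem_range.1 hj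
  have hscale : ∏ i ∈ Icc 1 (n - 1), (C ((k : ℚ) - j) * X + C ((i : ℚ) - j)) =
      (∏ i ∈ Icc 1 (n - 1), (X + C ((i : ℚ) - j))).comp (C ((k - j : ℕ) : ℚ) * X) := by
    rw [Polynomial.prod_comp, Nat.cast_sub hjk.le]
    simp only [add_comp, X_comp, C_comp]
  rw [coeff_smul, hscale, comp_C_mul_X_coeff, coeff_prod_Icc_X_add_C_sub (by omega) (by omega),
    smul_eq_mul, sum_mul, mul_sum]
  refine sum_congr rfl fun i _ => ?_
  ring

/-- formula for the coefficient of `t^m` in `E_{k,n}(t)`. -/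
theorem stmt_14 (n k m : ℕ) (hk : 1 ≤ k) (hkn : k ≤ n - 1) (hm : m ≤ n - 1) :
    (EhrhartHyp k n).coeff m =
      (1 / ((n - 1).factorial : ℚ)) *
        ∑ j ∈ Finset.range k, ∑ i ∈ Finset.range (n - m),
          (-1 : ℚ) ^ (i + j) * (n.choose j : ℚ) * ((k - j : ℕ) : ℚ) ^ m *
            (stirlingZ ((n : ℤ) - (j : ℤ)) ((m : ℤ) + 1 + (i : ℤ) - (j : ℤ)) : ℚ) *
            (stirlingZ (j : ℤ) ((j : ℤ) - (i : ℤ)) : ℚ) :=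
  stmt_14_general n k m hkn hm
end
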